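/- Let n be a positive integer and let A be an algebra (in a fixed signature) whose congruences are pairwise (n+1)-permutable. Then the map δ : A × A → Con_c(A) sending (x,y) to the principal congruence Θ_A(x,y) is a V-distance of type n, and its range join-generates the semilattice Con_c(A) of compact congruences of A. -/

import Mathlib

section UniversalAlgebra

variable {ι A : Type*}

/-- `r` is a congruence of the algebra `A` with operations `ops i` of arity `F i`:
an equivalence relation compatible with all the operations. -/
def IsCong (F : ι → ℕ) (ops : ∀ i, (Fin (F i) → A) → A) (r : A → A → Prop) : Prop :=
  Equivalence r ∧
    ∀ i (f g : Fin (F i) → A), (∀ k, r (f k) (g k)) → r (ops i f) (ops i g)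

/-- The congruence generated by a binary relation `s`. -/
def congGen (F : ι → ℕ) (ops : ∀ i, (Fin (F i) → A) → A) (s : A → A → Prop) :
    A → A → Prop :=
  fun u v => ∀ r : A → A → Prop, IsCong F ops r → (∀ p q, s p q → r p q) → r u v

/-- The principal congruence `Θ(x,y)`. -/
def theta (F : ι → ℕ) (ops : ∀ i, (Fin (F i) → A) → A) (x y : A) : A → A → Prop :=
  congGen F ops fun p q => p = x ∧ q = y

/-- The join of two congruences in the congruence lattice. -/
def congSup (F : ι → ℕ) (ops : ∀ i, (Fin (F i) → A) → A) (a b : A → A → Prop) :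
    A → A → Prop :=
  congGen F ops fun p q => a p q ∨ b p q

/-- A compact (= finitely generated) congruence. -/
def FGCong (F : ι → ℕ) (ops : ∀ i, (Fin (F i) → A) → A) (r : A → A → Prop) : Prop :=
  ∃ l : List (A × A), r = congGen F ops fun p q => (p, q) ∈ l

/-- The composition `γ_0 ∘ ⋯ ∘ γ_k` of relations. -/
def relChainComp {X : Type*} (γ : ℕ → X → X → Prop) : ℕ → X → X → Prop
  | 0 => γ 0
  | k + 1 => fun x y => ∃ z, relChainComp γ k x z ∧ γ (k + 1) z y

/-- Alternating sequence of relations: `α` at even places, `β` at odd ones. -/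
def altRel {X : Type*} (α β : X → X → Prop) (k : ℕ) : X → X → Prop :=
  if Even k then α else β


section Aux


theorem isCong_congGen (F : ι → ℕ) (ops : ∀ i, (Fin (F i) → A) → A) (s : A → A → Prop) :
    IsCong F ops (congGen F ops s) := by
  refine ⟨⟨fun u r hr hs => hr.1.refl u, fun h r hr hs => hr.1.symm (h r hr hs),
    fun h1 h2 r hr hs => hr.1.trans (h1 r hr hs) (h2 r hr hs)⟩,
    fun i f g h r hr hs => hr.2 i f g (fun k => h k r hr hs)⟩

theorem le_congGen (F : ι → ℕ) (ops : ∀ i, (Fin (F i) → A) → A) (s : A → A → Prop)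
    {p q : A} (h : s p q) : congGen F ops s p q :=
  fun r hr hs => hs p q h

theorem congGen_le (F : ι → ℕ) (ops : ∀ i, (Fin (F i) → A) → A) {s r : A → A → Prop}
    (hr : IsCong F ops r) (h : ∀ p q, s p q → r p q) {u v : A}
    (huv : congGen F ops s u v) : r u v :=
  huv r hr h

theorem theta_self (F : ι → ℕ) (ops : ∀ i, (Fin (F i) → A) → A) (x y : A) :
    theta F ops x y x y :=
  le_congGen F ops _ ⟨rfl, rfl⟩

theorem theta_le (F : ι → ℕ) (ops : ∀ i, (Fin (F i) → A) → A) {r : A → A → Prop}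
    (hr : IsCong F ops r) {x y : A} (h : r x y) {u v : A}
    (huv : theta F ops x y u v) : r u v :=
  congGen_le F ops hr (fun p q hpq => by obtain ⟨h1, h2⟩ := hpq; subst h1; subst h2; exact h) huv

theorem isCong_eq (F : ι → ℕ) (ops : ∀ i, (Fin (F i) → A) → A) :
    IsCong F ops (Eq : A → A → Prop) :=
  ⟨eq_equivalence, fun i f g h => congrArg (ops i) (funext h)⟩

theorem relChainComp_iff {X : Type*} (γ : ℕ → X → X → Prop) :
    ∀ (k : ℕ) (x y : X), relChainComp γ k x y ↔
      ∃ z : ℕ → X, z 0 = x ∧ z (k + 1) = y ∧ ∀ i ≤ k, γ i (z i) (z (i + 1)) := by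
  intro k
  induction k with
  | zero =>
    intro x y
    constructor
    · intro h
      refine ⟨fun i => if i = 0 then x else y, by simp, by simp, ?_⟩
      intro i hi
      interval_cases i
      simpa [relChainComp] using h
    · rintro ⟨z, h0, h1, hc⟩
      have := hc 0 le_rfl
      rw [h0, h1] at this
      exact this
  | succ k ih =>
    intro x y
    constructor
    · rintro ⟨z', hch, hstep⟩
      obtain ⟨z, h0, h1, hc⟩ := (ih x z').mp hch
      refine ⟨fun i => if i ≤ k + 1 then z i else y, by simp [h0], by simp, ?_⟩
      intro i hi
      rcases Nat.lt_or_ge i (k + 1) with h | h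
      · have hi1 : i ≤ k + 1 := le_of_lt h
        have hi2 : i + 1 ≤ k + 1 := h
        simp only [if_pos hi1, if_pos hi2]
        exact hc i (Nat.lt_succ_iff.mp h)
      · have : i = k + 1 := le_antisymm hi h
        subst this
        simp only [le_refl, if_pos, if_neg (by omega : ¬ (k + 1 + 1 ≤ k + 1))]
        rw [← h1] at hstep
        exact hstep
    · rintro ⟨z, h0, h1, hc⟩
      refine ⟨z (k + 1), (ih x (z (k + 1))).mpr ⟨z, h0, rfl, fun i hi => hc i (le_trans hi (Nat.le_succ k))⟩, ?_⟩
      rw [← h1]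
      exact hc (k + 1) le_rfl

theorem altRel_even {X : Type*} {a b : X → X → Prop} {i : ℕ} (h : Even i) :
    altRel a b i = a := if_pos h

theorem altRel_odd {X : Type*} {a b : X → X → Prop} {i : ℕ} (h : ¬ Even i) :
    altRel a b i = b := if_neg h

theorem altRel_succ {X : Type*} (a b : X → X → Prop) (i : ℕ) :
    altRel a b (i + 1) = altRel b a i := by
  by_cases h : Even i
  · rw [altRel_even h, altRel_odd (by simp [Nat.even_add_one, h])]
  · rw [altRel_odd h, altRel_even (by simp [Nat.even_add_one, h])]


theorem altRel_parity {X : Type*} (a b : X → X → Prop) {i j : ℕ} (h : Even i ↔ Even j) :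
    altRel a b i = altRel a b j := by
  by_cases h' : Even i
  · rw [altRel_even h', altRel_even (h.mp h')]
  · rw [altRel_odd h', altRel_odd (fun hj => h' (h.mpr hj))]

theorem altRel_parity' {X : Type*} (a b : X → X → Prop) {i j : ℕ} (h : Even i ↔ ¬ Even j) :
    altRel a b i = altRel b a j := by
  by_cases h' : Even i
  · rw [altRel_even h', altRel_odd (h.mp h')]
  · rw [altRel_odd h', altRel_even (by by_contra hj; exact h' (h.mpr hj))]

section Chain

variable {F : ι → ℕ} {ops : ∀ i, (Fin (F i) → A) → A} {a b : A → A → Prop}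
variable (ha : IsCong F ops a) (hb : IsCong F ops b)
include ha hb

theorem altRel_refl (i : ℕ) (x : A) : altRel a b i x x := by
  by_cases h : Even i
  · rw [altRel_even h]; exact ha.1.refl x
  · rw [altRel_odd h]; exact hb.1.refl x

theorem altRel_symm (i : ℕ) {p q : A} (h : altRel a b i p q) : altRel a b i q p := by
  by_cases h' : Even i
  · rw [altRel_even h'] at h ⊢; exact ha.1.symm h
  · rw [altRel_odd h'] at h ⊢; exact hb.1.symm h

theorem altRel_trans (i : ℕ) {p q r : A} (h : altRel a b i p q) (h' : altRel a b i q r) :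
    altRel a b i p r := by
  by_cases he : Even i
  · rw [altRel_even he] at h h' ⊢; exact ha.1.trans h h'
  · rw [altRel_odd he] at h h' ⊢; exact hb.1.trans h h'

theorem chain_snoc_match {n : ℕ} {x y w : A}
    (h : relChainComp (altRel a b) n x y) (hyw : altRel a b n y w) :
    relChainComp (altRel a b) n x w := by
  obtain ⟨z, h0, h1, hc⟩ := (relChainComp_iff _ n x y).mp h
  refine (relChainComp_iff _ n x w).mpr
    ⟨fun i => if i ≤ n then z i else w, by simp [h0], by simp, ?_⟩
  intro i hi
  rcases Nat.lt_or_ge i n with hlt | hge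
  · simp only [if_pos hi, if_pos (show i + 1 ≤ n from hlt)]
    exact hc i (le_of_lt hlt)
  · have hin : i = n := le_antisymm hi hge
    subst hin
    simp only [if_pos le_rfl, if_neg (show ¬ (i + 1 ≤ i) by omega)]
    exact altRel_trans ha hb i (h1 ▸ hc i le_rfl) hyw

theorem chain_cons_merge {n : ℕ} {x x' w : A} (hx : a x x')
    (h : relChainComp (altRel a b) n x' w) : relChainComp (altRel a b) n x w := by
  obtain ⟨u, h0, h1, hc⟩ := (relChainComp_iff _ n x' w).mp h
  refine (relChainComp_iff _ n x w).mpr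
    ⟨fun i => if i = 0 then x else u i, by simp, by simp [h1], ?_⟩
  intro i hi
  rcases eq_or_ne i 0 with rfl | hne
  · simp only [if_pos rfl, if_neg (Nat.one_ne_zero)]
    have h00 := hc 0 (Nat.zero_le n)
    rw [altRel_even (Even.zero), h0] at h00
    rw [altRel_even (Even.zero)]
    exact ha.1.trans hx h00
  · simp only [if_neg hne, if_neg (show ¬ (i + 1 = 0) by omega)]
    exact hc i hi

theorem chain_shift {n : ℕ} {x y w : A}
    (h : relChainComp (altRel a b) n x y) (hyw : altRel b a n y w) :
    ∃ x', a x x' ∧ relChainComp (altRel b a) n x' w := by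
  obtain ⟨z, h0, h1, hc⟩ := (relChainComp_iff _ n x y).mp h
  have first : a x (z 1) := by
    have h00 := hc 0 (Nat.zero_le n)
    rw [altRel_even (Even.zero), h0] at h00
    exact h00
  refine ⟨z 1, first, (relChainComp_iff _ n (z 1) w).mpr
    ⟨fun i => if i ≤ n then z (i + 1) else w, by simp, by simp, ?_⟩⟩
  intro i hi
  rcases Nat.lt_or_ge i n with hlt | hge
  · simp only [if_pos hi, if_pos (show i + 1 ≤ n from hlt)]
    rw [← altRel_succ]
    exact hc (i + 1) hlt
  · have hin : i = n := le_antisymm hi hge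
    subst hin
    simp only [if_pos le_rfl, if_neg (show ¬ (i + 1 ≤ i) by omega)]
    rw [h1]
    exact hyw

theorem chain_snoc {n : ℕ}
    (hperm : ∀ x y : A, relChainComp (altRel a b) n x y ↔ relChainComp (altRel b a) n x y)
    {x y w : A} (h : relChainComp (altRel a b) n x y) (hyw : a y w ∨ b y w) :
    relChainComp (altRel a b) n x w := by
  have key : altRel a b n y w ∨ altRel b a n y w := by
    by_cases hp : Even n
    · rcases hyw with h' | h'
      · left; rwa [altRel_even hp]
      · right; rwa [altRel_even hp]
    · rcases hyw with h' | h'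
      · right; rwa [altRel_odd hp]
      · left; rwa [altRel_odd hp]
  rcases key with h' | h'
  · exact chain_snoc_match ha hb h h'
  · obtain ⟨x', hx, hch⟩ := chain_shift ha hb h h'
    exact chain_cons_merge ha hb hx ((hperm x' w).mpr hch)

theorem chain_trans {n : ℕ}
    (hperm : ∀ x y : A, relChainComp (altRel a b) n x y ↔ relChainComp (altRel b a) n x y)
    (k : ℕ) : ∀ {x y w : A}, relChainComp (altRel a b) n x y →
      relChainComp (altRel a b) k y w → relChainComp (altRel a b) n x w := by
  induction k with
  | zero =>
    intro x y w h h'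
    have : a y w := by
      have : altRel a b 0 y w := h'
      rwa [altRel_even (Even.zero)] at this
    exact chain_snoc ha hb hperm h (Or.inl this)
  | succ k ih =>
    intro x y w h h'
    obtain ⟨z', hch, hstep⟩ := h'
    have hx := ih h hch
    refine chain_snoc ha hb hperm hx ?_
    by_cases hp : Even (k + 1)
    · left; rwa [altRel_even hp] at hstep
    · right; rwa [altRel_odd hp] at hstep

theorem chain_refl (n : ℕ) (x : A) : relChainComp (altRel a b) n x x :=
  (relChainComp_iff _ n x x).mpr
    ⟨fun _ => x, rfl, rfl, fun i _ => altRel_refl ha hb i x⟩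

theorem chain_symm {n : ℕ}
    (hperm : ∀ x y : A, relChainComp (altRel a b) n x y ↔ relChainComp (altRel b a) n x y)
    {x y : A} (h : relChainComp (altRel a b) n x y) :
    relChainComp (altRel a b) n y x := by
  obtain ⟨z, h0, h1, hc⟩ := (relChainComp_iff _ n x y).mp h
  have main : ∀ i ≤ n, altRel a b (n - i) (z (n + 1 - i)) (z (n - i)) := by
    intro i hi
    have hstep := hc (n - i) (Nat.sub_le n i)
    have heq : n - i + 1 = n + 1 - i := by omega
    rw [heq] at hstep
    exact altRel_symm ha hb _ hstep
  by_cases hp : Even n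
  · refine (relChainComp_iff _ n y x).mpr ⟨fun i => z (n + 1 - i), by simp [h1], by simp [h0], ?_⟩
    intro i hi
    have heq : n + 1 - (i + 1) = n - i := by omega
    show altRel a b i (z (n + 1 - i)) (z (n + 1 - (i + 1)))
    rw [heq]
    have hpar : Even i ↔ Even (n - i) := by
      rw [Nat.even_sub hi]
      constructor
      · intro h'; exact ⟨fun _ => h', fun _ => hp⟩
      · intro h'; exact h'.mp hp
    rw [altRel_parity a b hpar]
    exact main i hi
  · refine (hperm y x).mpr ?_
    refine (relChainComp_iff _ n y x).mpr ⟨fun i => z (n + 1 - i), by simp [h1], by simp [h0], ?_⟩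
    intro i hi
    have heq : n + 1 - (i + 1) = n - i := by omega
    show altRel b a i (z (n + 1 - i)) (z (n + 1 - (i + 1)))
    rw [heq]
    have hpar : Even i ↔ ¬ Even (n - i) := by
      rw [Nat.even_sub hi]
      constructor
      · intro h' h''; exact hp (h''.mpr h')
      · intro h'; by_contra hi'
        exact h' ⟨fun h'' => absurd h'' hp, fun h'' => absurd h'' hi'⟩
    rw [altRel_parity' b a hpar]
    exact main i hi

theorem chain_compat (n : ℕ) :
    ∀ j (f g : Fin (F j) → A), (∀ k, relChainComp (altRel a b) n (f k) (g k)) →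
      relChainComp (altRel a b) n (ops j f) (ops j g) := by
  intro j f g h
  choose Z h0 h1 hc using fun k => (relChainComp_iff (altRel a b) n (f k) (g k)).mp (h k)
  refine (relChainComp_iff _ n (ops j f) (ops j g)).mpr
    ⟨fun i => ops j (fun k => Z k i), ?_, ?_, ?_⟩
  · exact congrArg (ops j) (funext h0)
  · exact congrArg (ops j) (funext h1)
  · intro i hi
    by_cases hp : Even i
    · rw [altRel_even hp]
      exact ha.2 j _ _ (fun k => by have := hc k i hi; rwa [altRel_even hp] at this)
    · rw [altRel_odd hp]
      exact hb.2 j _ _ (fun k => by have := hc k i hi; rwa [altRel_odd hp] at this)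

theorem isCong_chain (n : ℕ)
    (hperm : ∀ x y : A, relChainComp (altRel a b) n x y ↔ relChainComp (altRel b a) n x y) :
    IsCong F ops (relChainComp (altRel a b) n) :=
  ⟨⟨chain_refl ha hb n, fun h => chain_symm ha hb hperm h,
    fun h h' => chain_trans ha hb hperm n h h'⟩, chain_compat ha hb n⟩

theorem le_chain (n : ℕ)
    (hperm : ∀ x y : A, relChainComp (altRel a b) n x y ↔ relChainComp (altRel b a) n x y)
    (p q : A) (h : a p q ∨ b p q) : relChainComp (altRel a b) n p q :=
  chain_snoc ha hb hperm (chain_refl ha hb n p) h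

end Chain
end Aux

/-- If the congruences of an algebra `A` are pairwise `(n+1)`-permutable, then
`(x,y) ↦ Θ_A(x,y)` is a V-distance of type `n` on `A` with values in the
semilattice of compact congruences, and its range join-generates that
semilattice. -/
theorem theta_Vdistance_of_permutable (F : ι → ℕ) (ops : ∀ i, (Fin (F i) → A) → A)
    (n : ℕ) (hn : 0 < n)
    (hperm : ∀ a b : A → A → Prop, IsCong F ops a → IsCong F ops b →
      ∀ x y : A, relChainComp (altRel a b) n x y ↔ relChainComp (altRel b a) n x y) :
    -- Θ is an (Con_c A)-valued distance:
    (∀ x u v : A, theta F ops x x u v ↔ u = v) ∧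
    (∀ x y u v : A, theta F ops x y u v ↔ theta F ops y x u v) ∧
    (∀ x y z u v : A, theta F ops x z u v →
      congSup F ops (theta F ops x y) (theta F ops y z) u v) ∧
    -- Θ satisfies the V-condition of type n:
    (∀ x y : A, ∀ a b : A → A → Prop, FGCong F ops a → FGCong F ops b →
      (∀ u v, theta F ops x y u v → congSup F ops a b u v) →
      ∃ z : ℕ → A, z 0 = x ∧ z (n + 1) = y ∧
        ∀ i ≤ n, (Even i → ∀ u v, theta F ops (z i) (z (i + 1)) u v → a u v) ∧
          (Odd i → ∀ u v, theta F ops (z i) (z (i + 1)) u v → b u v)) ∧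
    -- the range of Θ join-generates Con_c A:
    (∀ r : A → A → Prop, FGCong F ops r → ∃ l : List (A × A),
      ∀ u v, r u v ↔
        congGen F ops (fun p q => ∃ pr ∈ l, theta F ops pr.1 pr.2 p q) u v) := by

  refine ⟨?_, ?_, ?_, ?_, ?_⟩
  · intro x u v
    constructor
    · intro h
      exact theta_le F ops (isCong_eq F ops) rfl h
    · rintro rfl
      exact (isCong_congGen F ops _).1.refl u
  · have key : ∀ x y u v : A, theta F ops x y u v → theta F ops y x u v := by
      intro x y u v h
      exact theta_le F ops (isCong_congGen F ops _)
        ((isCong_congGen F ops _).1.symm (theta_self F ops y x)) h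
    exact fun x y u v => ⟨key x y u v, key y x u v⟩
  · intro x y z u v h
    refine theta_le F ops (isCong_congGen F ops _) ?_ h
    exact (isCong_congGen F ops _).1.trans
      (le_congGen F ops _ (Or.inl (theta_self F ops x y)))
      (le_congGen F ops _ (Or.inr (theta_self F ops y z)))
  · intro x y a b hfa hfb hle
    obtain ⟨la, hae⟩ := hfa
    obtain ⟨lb, hbe⟩ := hfb
    have ha : IsCong F ops a := by rw [hae]; exact isCong_congGen F ops _
    have hb : IsCong F ops b := by rw [hbe]; exact isCong_congGen F ops _
    have hp := hperm a b ha hb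
    have hRc : IsCong F ops (relChainComp (altRel a b) n) := isCong_chain ha hb n hp
    have hxy : relChainComp (altRel a b) n x y :=
      congGen_le F ops hRc (le_chain ha hb n hp) (hle x y (theta_self F ops x y))
    obtain ⟨z, h0, h1, hc⟩ := (relChainComp_iff _ n x y).mp hxy
    refine ⟨z, h0, h1, ?_⟩
    intro i hi
    constructor
    · intro hev u v h
      have hstep := hc i hi
      rw [altRel_even hev] at hstep
      exact theta_le F ops ha hstep h
    · intro hodd u v h
      have hstep := hc i hi
      rw [altRel_odd (Nat.not_even_iff_odd.mpr hodd)] at hstep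
      exact theta_le F ops hb hstep h
  · intro r hr
    obtain ⟨l, rfl⟩ := hr
    refine ⟨l, fun u v => ⟨?_, ?_⟩⟩
    · intro h
      refine congGen_le F ops (isCong_congGen F ops _) ?_ h
      intro p q hpq
      exact le_congGen F ops _ ⟨(p, q), hpq, theta_self F ops p q⟩
    · intro h
      refine congGen_le F ops (isCong_congGen F ops _) ?_ h
      rintro p q ⟨pr, hpr, hth⟩
      exact theta_le F ops (isCong_congGen F ops _)
        (le_congGen F ops _ (by simpa using hpr)) hth

end UniversalAlgebra
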